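/- Let p ∈ [1,∞), γ < p−1, and let X be a Banach space. If u : (0,∞) → X is continuously differentiable with ∫₀^∞ ‖u(t)‖_X^p t^γ dt < ∞ and ∫₀^∞ ‖u'(t)‖_X^p t^γ dt < ∞, then the limit lim_{t→0⁺} u(t) exists in X; in particular u extends to a continuous function on [0,∞). -/

import Mathlib

/-!
For `p > 1` and `0 < t ≤ 1` one has `‖u' t‖ ≤ ‖u' t‖^p t^γ + t^(-γ/(p-1))`, and `t^(-γ/(p-1))` is
integrable on `(0, 1]` exactly because `γ < p - 1` (for `p = 1` simply `t^γ ≥ 1`). Hence `u'` is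
integrable near `0`, and `u t = u 1 - ∫_t^1 u'` converges as `t → 0⁺`.
-/

open MeasureTheory ENNReal Set Topology Filter

/-- Either `a^(p-1) w ≥ 1`, and then `a ≤ a^p w`, or `a < w^(-1/(p-1))`. -/
theorem Real.le_rpow_mul_add_rpow {a w p : ℝ} (ha : 0 ≤ a) (hw : 0 < w) (hp : 1 < p) :
    a ≤ a ^ p * w + w ^ (-(p - 1)⁻¹) := by
  have hp1 : 0 < p - 1 := sub_pos.2 hp
  by_cases h : 1 ≤ a ^ (p - 1) * w
  · have hsplit : a ^ p = a * a ^ (p - 1) := by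
      conv_lhs => rw [show p = 1 + (p - 1) by ring]
      rw [Real.rpow_add' ha (by linarith), Real.rpow_one]
    calc a ≤ a * (a ^ (p - 1) * w) := le_mul_of_one_le_right ha h
      _ = a ^ p * w := by rw [hsplit, mul_assoc]
      _ ≤ a ^ p * w + w ^ (-(p - 1)⁻¹) := le_add_of_nonneg_right (by positivity)
  · have hlt : a ^ (p - 1) < w⁻¹ := by
      rw [← one_div, lt_div_iff₀ hw]; linarith
    calc a = (a ^ (p - 1)) ^ (p - 1)⁻¹ := (Real.rpow_rpow_inv ha hp1.ne').symm
      _ ≤ w⁻¹ ^ (p - 1)⁻¹ :=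
          (Real.rpow_lt_rpow (by positivity) hlt (inv_pos.2 hp1)).le
      _ = w ^ (-(p - 1)⁻¹) := by rw [Real.inv_rpow hw.le, Real.rpow_neg hw.le]
      _ ≤ a ^ p * w + w ^ (-(p - 1)⁻¹) := le_add_of_nonneg_left (by positivity)

theorem integrableOn_Ioc_of_lintegral_rpow_mul_rpow_ne_top {E : Type*} [NormedAddCommGroup E]
    {f : ℝ → E} {p γ : ℝ} (hp : 1 ≤ p) (hγ : γ < p - 1)
    (hf : AEStronglyMeasurable f (volume.restrict (Ioc 0 1)))
    (hfin : ∫⁻ t in Ioc 0 1, ‖f t‖ₑ ^ p * ENNReal.ofReal (t ^ γ) ≠ ⊤) :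
    IntegrableOn f (Ioc 0 1) := by
  refine ⟨hf, ?_⟩
  rcases hp.eq_or_lt with rfl | hp
  · have hγ : γ ≤ 0 := by linarith
    refine lt_of_le_of_lt (setLIntegral_mono' measurableSet_Ioc fun t ht => ?_) hfin.lt_top
    have hweight : 1 ≤ t ^ γ := Real.one_le_rpow_of_pos_of_le_one_of_nonpos ht.1 ht.2 hγ
    calc ‖f t‖ₑ = ‖f t‖ₑ ^ (1 : ℝ) * 1 := by simp
      _ ≤ ‖f t‖ₑ ^ (1 : ℝ) * ENNReal.ofReal (t ^ γ) := by
          gcongr; exact ENNReal.one_le_ofReal.2 hweight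
  · set s := -γ / (p - 1)
    have hs : -1 < s := by
      rw [lt_div_iff₀ (sub_pos.2 hp)]; linarith
    have hpow : IntegrableOn (fun t : ℝ => t ^ s) (Ioc 0 1) :=
      (intervalIntegrable_iff_integrableOn_Ioc_of_le zero_le_one).1
        (intervalIntegral.intervalIntegrable_rpow' hs)
    have hbound : ∀ t ∈ Ioc (0 : ℝ) 1,
        ‖f t‖ₑ ≤ ‖f t‖ₑ ^ p * ENNReal.ofReal (t ^ γ) + ENNReal.ofReal (t ^ s) := by
      intro t ⟨ht0, _⟩
      have hweight : (t ^ γ) ^ (-(p - 1)⁻¹) = t ^ s := by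
        rw [← Real.rpow_mul ht0.le]; congr 1; exact (by ring : γ * -(p - 1)⁻¹ = -γ / (p - 1))
      rw [← ofReal_norm, ENNReal.ofReal_rpow_of_nonneg (norm_nonneg _) (by linarith),
        ← ENNReal.ofReal_mul (by positivity),
        ← ENNReal.ofReal_add (by positivity) (by positivity),
        ← hweight]
      exact ENNReal.ofReal_le_ofReal
        (Real.le_rpow_mul_add_rpow (norm_nonneg _) (Real.rpow_pos_of_pos ht0 γ) hp)
    calc ∫⁻ t in Ioc 0 1, ‖f t‖ₑ
        ≤ ∫⁻ t in Ioc 0 1, ‖f t‖ₑ ^ p * ENNReal.ofReal (t ^ γ) + ENNReal.ofReal (t ^ s) :=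
          setLIntegral_mono' measurableSet_Ioc hbound
      _ = (∫⁻ t in Ioc 0 1, ‖f t‖ₑ ^ p * ENNReal.ofReal (t ^ γ)) +
            ∫⁻ t in Ioc 0 1, ENNReal.ofReal (t ^ s) :=
          lintegral_add_right _ (by fun_prop)
      _ < ⊤ := ENNReal.add_lt_top.2 ⟨hfin.lt_top, hpow.setLIntegral_lt_top⟩

theorem tendsto_nhdsGT_of_hasDerivAt_of_integrableOn {E : Type*} [NormedAddCommGroup E]
    [NormedSpace ℝ E] [CompleteSpace E] {u u' : ℝ → E} {a b : ℝ} (hab : a < b)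
    (hder : ∀ t ∈ Ioc a b, HasDerivAt u (u' t) t) (hint : IntegrableOn u' (Ioc a b)) :
    Tendsto u (𝓝[>] a) (𝓝 (u b - ∫ t in a..b, u' t)) := by
  have hcont : ContinuousOn (fun t => ∫ s in t..b, u' s) (Icc a b) := by
    rw [← uIcc_of_le hab.le]
    refine intervalIntegral.continuousOn_primitive_interval_left ?_
    rwa [uIcc_of_le hab.le, integrableOn_Icc_iff_integrableOn_Ioc]
  have hprim : Tendsto (fun t => ∫ s in t..b, u' s) (𝓝[>] a) (𝓝 (∫ s in a..b, u' s)) :=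
    ((hcont a (left_mem_Icc.2 hab.le)).mono_of_mem_nhdsWithin (Icc_mem_nhdsGT hab)).tendsto
  refine (tendsto_const_nhds.sub hprim).congr' ?_
  filter_upwards [Ioo_mem_nhdsGT hab] with t ht
  have hder_tb : ∀ s ∈ uIcc t b, HasDerivAt u (u' s) s := fun s hs => by
    rw [uIcc_of_le ht.2.le] at hs
    exact hder s ⟨ht.1.trans_le hs.1, hs.2⟩
  have hint_tb : IntervalIntegrable u' volume t b :=
    (intervalIntegrable_iff_integrableOn_Ioc_of_le ht.2.le).2
      (hint.mono_set (Ioc_subset_Ioc_left ht.1.le))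
  rw [intervalIntegral.integral_eq_sub_of_hasDerivAt hder_tb hint_tb]
  abel

theorem trace_existence_halfline_general (p γ : ℝ) (hp : 1 ≤ p) (hγ : γ < p - 1)
    (X : Type*) [NormedAddCommGroup X] [NormedSpace ℝ X] [CompleteSpace X]
    (u u' : ℝ → X)
    (hder : ∀ t ∈ Ioi (0:ℝ), HasDerivAt u (u' t) t)
    (hu' : (∫⁻ t in Ioi (0:ℝ), (‖u' t‖₊ : ℝ≥0∞) ^ p * ENNReal.ofReal (t ^ γ)) ≠ ⊤) :
    (∃ x₀ : X, Tendsto u (𝓝[>] (0:ℝ)) (𝓝 x₀)) ∧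
    (∃ v : ℝ → X, ContinuousOn v (Ici (0:ℝ)) ∧ ∀ t ∈ Ioi (0:ℝ), v t = u t) := by
  have hmeas : AEStronglyMeasurable u' (volume.restrict (Ioc 0 1)) :=
    (aestronglyMeasurable_deriv u _).congr <| ae_restrict_of_forall_mem measurableSet_Ioc
      fun t ht => (hder t ht.1).deriv
  have hint : IntegrableOn u' (Ioc 0 1) :=
    integrableOn_Ioc_of_lintegral_rpow_mul_rpow_ne_top hp hγ hmeas
      (ne_top_of_le_ne_top hu' (lintegral_mono_set Ioc_subset_Ioi_self))
  obtain ⟨x₀, hlim⟩ : ∃ x₀, Tendsto u (𝓝[>] 0) (𝓝 x₀) :=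
    ⟨_, tendsto_nhdsGT_of_hasDerivAt_of_integrableOn zero_lt_one (fun t ht => hder t ht.1) hint⟩
  refine ⟨⟨_, hlim⟩, Function.update u 0 x₀, ?_, fun t ht => Function.update_of_ne ht.ne' _ _⟩
  rw [continuousOn_update_iff, Ici_sdiff_left]
  exact ⟨fun t ht => (hder t ht).continuousAt.continuousWithinAt, fun _ => hlim⟩

/-- **Sobolev embedding `W^{1,p}(ℝ_+, w_γ; X) ↪ C([0,∞); X)` for `γ < p-1`**
(Lemma 3.1 of \[LV18\]): a continuously differentiable function on `(0,∞)` with finite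
weighted norms has a limit at `0⁺`, hence extends continuously to `[0,∞)`. -/
theorem trace_existence_halfline (p γ : ℝ) (hp : 1 ≤ p) (hγ : γ < p - 1)
    (X : Type*) [NormedAddCommGroup X] [NormedSpace ℝ X] [CompleteSpace X]
    (u u' : ℝ → X)
    (hc : ContinuousOn u' (Ioi (0:ℝ)))
    (hder : ∀ t ∈ Ioi (0:ℝ), HasDerivAt u (u' t) t)
    (hu : (∫⁻ t in Ioi (0:ℝ), (‖u t‖₊ : ℝ≥0∞) ^ p * ENNReal.ofReal (t ^ γ)) ≠ ⊤)
    (hu' : (∫⁻ t in Ioi (0:ℝ), (‖u' t‖₊ : ℝ≥0∞) ^ p * ENNReal.ofReal (t ^ γ)) ≠ ⊤) :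
    (∃ x₀ : X, Tendsto u (𝓝[>] (0:ℝ)) (𝓝 x₀)) ∧
    (∃ v : ℝ → X, ContinuousOn v (Ici (0:ℝ)) ∧ ∀ t ∈ Ioi (0:ℝ), v t = u t) :=
  trace_existence_halfline_general p γ hp hγ X u u' hder hu'
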